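/- arXiv:1308.4921 — 4 statements merged into one kernel-verified Lean document; each statement's English description precedes it below -/
import Mathlib

section
/- Let G be a finite group, A a C*-algebra with an action α of G, and for an ideal I ⊆ A and a subset S ⊆ G containing 1, define I_S = Σ_{g∈G} α_g(⋂_{h∈S} α_h(I)) and I_S⁻ = Σ_{g∈G∖S} I_{S∪{g}} (with I_G⁻ = 0). If L ⊆ M are ideals of A such that (I_S ∩ L) + I_S⁻ = (I_S ∩ M) + I_S⁻ for every subset S ⊆ G containing 1, then I_{{1}} ∩ L = I_{{1}} ∩ M. -/
/-!
Since `L ≤ M`, it suffices to show `I_S ⊓ M ≤ L` for every `S ∋ 1`, by downward induction on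
`S`. The hypothesis for `S` and the modular law in the ideal lattice reduce this to
`I_S⁻ ⊓ M ≤ L`, and the induction hypothesis gives `I_{S ∪ {g}} ⊓ M ≤ L` for each summand of
`I_S⁻`. To pass to the sum we use that for a closed ideal `L`, `J ⊓ M ≤ L` holds as soon as
`M * J ⊆ L`: an element `x ∈ J ⊓ M` is a limit of elements `x * v * x ∈ M * J`.
-/

variable {G : Type*} [Group G] [Fintype G] {A : Type*} [NonUnitalCStarAlgebra A]

/-- The image of a two-sided ideal under a *-algebra automorphism. -/
def idealMap (e : A ≃⋆ₐ[ℂ] A) (I : TwoSidedIdeal A) : TwoSidedIdeal A :=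
  TwoSidedIdeal.comap e.symm I

/-- `I_S = Σ_{g ∈ G} α_g (⋂_{h ∈ S} α_h(I))`. -/
def idealIS (α : G → A ≃⋆ₐ[ℂ] A) (I : TwoSidedIdeal A) (S : Set G) : TwoSidedIdeal A :=
  ⨆ g : G, idealMap (α g) (⨅ h ∈ S, idealMap (α h) I)

/-- `I_S⁻ = Σ_{g ∈ G \ S} I_{S ∪ {g}}` (so `I_G⁻ = 0`). -/
def idealISm (α : G → A ≃⋆ₐ[ℂ] A) (I : TwoSidedIdeal A) (S : Set G) : TwoSidedIdeal A :=
  ⨆ g ∈ Sᶜ, idealIS α I (insert g S)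

lemma inf_le_of_inf_sup_eq {α : Type*} [Lattice α] [IsModularLattice α] {a K L M : α}
    (hLM : L ≤ M) (h : a ⊓ L ⊔ K = a ⊓ M ⊔ K) (hK : K ⊓ M ≤ L) : a ⊓ M ≤ L :=
  calc a ⊓ M ≤ (a ⊓ M ⊔ K) ⊓ M := le_inf le_sup_left inf_le_right
    _ = (a ⊓ L ⊔ K) ⊓ M := by rw [h]
    _ = a ⊓ L ⊔ K ⊓ M := sup_inf_assoc_of_le K (inf_le_right.trans hLM)
    _ ≤ L := sup_le inf_le_right hK

namespace TwoSidedIdeal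

variable {R : Type*} [NonUnitalRing R]

instance : IsModularLattice (TwoSidedIdeal R) where
  sup_inf_le_assoc_of_le {I} J {K} hIK x hx := by
    obtain ⟨y, hyI, z, hzJ, rfl⟩ := mem_sup.1 hx.1
    have hzK : z ∈ K := add_sub_cancel_left y z ▸ K.sub_mem hx.2 (hIK hyI)
    exact mem_sup.2 ⟨y, hyI, z, ⟨hzJ, hzK⟩, rfl⟩

def colon (L M : TwoSidedIdeal R) : TwoSidedIdeal R :=
  .mk' {z | ∀ m ∈ M, m * z ∈ L}
    (fun m _ => by rw [mul_zero]; exact L.zero_mem)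
    (fun hx hy m hm => by rw [mul_add]; exact L.add_mem (hx m hm) (hy m hm))
    (fun hx m hm => by rw [mul_neg]; exact L.neg_mem (hx m hm))
    (fun {x _} hy m hm => by rw [← mul_assoc]; exact hy (m * x) (M.mul_mem_right m x hm))
    (fun {_ y} hx m hm => by rw [← mul_assoc]; exact L.mul_mem_right _ y (hx m hm))

lemma mem_colon {L M : TwoSidedIdeal R} {z : R} : z ∈ colon L M ↔ ∀ m ∈ M, m * z ∈ L :=
  mem_mk' ..

lemma le_colon_of_inf_le {J L M : TwoSidedIdeal R} (h : J ⊓ M ≤ L) : J ≤ colon L M :=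
  fun w hw => mem_colon.2 fun m hm => h ⟨J.mul_mem_left m w hw, M.mul_mem_right m w hm⟩

end TwoSidedIdeal

lemma abs_mul_div_add_sq_sq_le {δ : ℝ} (hδ : 0 < δ) (t : ℝ) :
    |t * (δ ^ 2 / (δ ^ 2 + t ^ 2)) ^ 2| ≤ δ / 2 := by
  have hd : 0 < δ ^ 2 + t ^ 2 := by positivity
  have hamgm : 2 * δ * |t| ≤ δ ^ 2 + t ^ 2 := by nlinarith [sq_nonneg (δ - |t|), sq_abs t]
  have hδt : δ ^ 2 ≤ δ ^ 2 + t ^ 2 := le_add_of_nonneg_right (sq_nonneg t)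
  rw [abs_mul, abs_of_nonneg (by positivity : (0 : ℝ) ≤ (δ ^ 2 / (δ ^ 2 + t ^ 2)) ^ 2), div_pow,
    mul_div_assoc', div_le_div_iff₀ (by positivity) two_pos]
  nlinarith [abs_nonneg t, mul_le_mul hamgm hδt (by positivity) hd.le]

lemma cfcₙ_mul_one_sub_sq {f : ℝ → ℝ} (hf : Continuous f) (hf0 : f 0 = 0) {b : A}
    (hb : IsSelfAdjoint b) :
    cfcₙ (fun t => t * (1 - f t) ^ 2) b =
      cfcₙ f b * b * cfcₙ f b - cfcₙ f b * b - b * cfcₙ f b + b := by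
  have hexpand :
      (fun t => t * (1 - f t) ^ 2) = fun t => f t * t * f t - f t * t - t * f t + t := by
    ext t; ring
  rw [hexpand, cfcₙ_add _ (fun t => t) b, cfcₙ_sub _ (fun t => t * f t) b,
    cfcₙ_sub (fun t => f t * t * f t) (fun t => f t * t) b, cfcₙ_mul (fun t => f t * t) f b,
    cfcₙ_mul f (fun t => t) b, cfcₙ_mul (fun t => t) f b, cfcₙ_id' ℝ b]

/-- With `b = x x*` and `u = b² (ε⁴ + b²)⁻¹`, `‖u x - x‖² = ‖(1 - u)² b‖ ≤ ε² / 2`. -/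
lemma mem_closure_range_mul_mul (x : A) : x ∈ closure (Set.range (x * · * x)) := by
  refine Metric.mem_closure_iff.2 fun ε hε => ?_
  set b := x * star x
  have hb : IsSelfAdjoint b := .mul_star_self x
  set g : ℝ → ℝ := fun t => t / (ε ^ 4 + t ^ 2)
  have hg : Continuous g := by fun_prop (disch := intro; positivity)
  set f : ℝ → ℝ := fun t => t * g t
  have hf : Continuous f := by fun_prop
  have hu : cfcₙ f b = b * cfcₙ g b := by rw [cfcₙ_mul (fun t => t) g b, cfcₙ_id' ℝ b]
  refine ⟨x * (star x * cfcₙ g b) * x, ⟨_, rfl⟩, ?_⟩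
  rw [← mul_assoc x, ← hu, dist_comm, dist_eq_norm]
  have hy :
      (cfcₙ f b * x - x) * star (cfcₙ f b * x - x) = cfcₙ (fun t => t * (1 - f t) ^ 2) b := by
    rw [cfcₙ_mul_one_sub_sq hf (by simp [f]) hb, star_sub, star_mul, (cfcₙ_predicate f b).star_eq]
    simp only [b]
    noncomm_ring
  have hbound : ‖cfcₙ f b * x - x‖ * ‖cfcₙ f b * x - x‖ ≤ ε ^ 2 / 2 := by
    rw [← CStarRing.norm_self_mul_star, hy]
    refine norm_cfcₙ_le fun t _ => ?_
    have hone_sub : 1 - f t = (ε ^ 2) ^ 2 / ((ε ^ 2) ^ 2 + t ^ 2) := by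
      simp only [f, g]; field_simp; ring
    rw [Real.norm_eq_abs, hone_sub]
    exact abs_mul_div_add_sq_sq_le (pow_pos hε 2) t
  nlinarith [norm_nonneg (cfcₙ f b * x - x)]

namespace TwoSidedIdeal

lemma mem_of_forall_mul_mul_mem {L : TwoSidedIdeal A} (hL : IsClosed (L : Set A)) {x : A}
    (hx : ∀ v, x * v * x ∈ L) : x ∈ L :=
  hL.closure_subset_iff.2 (Set.range_subset_iff.2 hx) (mem_closure_range_mul_mul x)

lemma inf_le_of_le_colon {J L M : TwoSidedIdeal A} (hL : IsClosed (L : Set A))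
    (hJ : J ≤ colon L M) : J ⊓ M ≤ L := fun x hx =>
  mem_of_forall_mul_mul_mem hL fun v =>
    mem_colon.1 (hJ hx.1) (x * v) (M.mul_mem_right x v hx.2)

lemma iSup_inf_le {ι : Sort*} {J : ι → TwoSidedIdeal A} {L M : TwoSidedIdeal A}
    (hL : IsClosed (L : Set A)) (h : ∀ i, J i ⊓ M ≤ L) : (⨆ i, J i) ⊓ M ≤ L :=
  inf_le_of_le_colon hL (iSup_le fun i => le_colon_of_inf_le (h i))

end TwoSidedIdeal

lemma idealIS_inf_le {α : G → A ≃⋆ₐ[ℂ] A} {I L M : TwoSidedIdeal A}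
    (hLc : IsClosed (L : Set A)) (hLM : L ≤ M)
    (h : ∀ S : Set G, (1 : G) ∈ S →
      (idealIS α I S ⊓ L) ⊔ idealISm α I S = (idealIS α I S ⊓ M) ⊔ idealISm α I S)
    (S : Set G) (hS : (1 : G) ∈ S) : idealIS α I S ⊓ M ≤ L := by
  induction S using WellFoundedGT.induction with
  | _ S ih =>
    refine inf_le_of_inf_sup_eq hLM (h S hS) ?_
    refine TwoSidedIdeal.iSup_inf_le hLc fun g => TwoSidedIdeal.iSup_inf_le hLc fun hg => ?_
    exact ih _ (Set.ssubset_insert hg) (Set.mem_insert_of_mem g hS)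

theorem stmt2_general (α : G → A ≃⋆ₐ[ℂ] A)
    (I L M : TwoSidedIdeal A)
    (hLc : IsClosed (L : Set A))
    (hLM : L ≤ M)
    (h : ∀ S : Set G, (1 : G) ∈ S →
      (idealIS α I S ⊓ L) ⊔ idealISm α I S = (idealIS α I S ⊓ M) ⊔ idealISm α I S) :
    idealIS α I {1} ⊓ L = idealIS α I {1} ⊓ M :=
  le_antisymm (inf_le_inf_left _ hLM) (le_inf inf_le_left (idealIS_inf_le hLc hLM h {1} rfl))

/-- Lemma on matching ideals: if `L ≤ M` and `(I_S ⊓ L) ⊔ I_S⁻ = (I_S ⊓ M) ⊔ I_S⁻`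
for all `S ⊆ G` with `1 ∈ S`, then `I_{{1}} ⊓ L = I_{{1}} ⊓ M`. -/
theorem stmt2 (α : G → A ≃⋆ₐ[ℂ] A) (hα1 : α 1 = StarAlgEquiv.refl ℂ A)
    (hαmul : ∀ g h : G, α (g * h) = (α h).trans (α g))
    (I L M : TwoSidedIdeal A)
    (hIc : IsClosed (I : Set A)) (hLc : IsClosed (L : Set A)) (hMc : IsClosed (M : Set A))
    (hLM : L ≤ M)
    (h : ∀ S : Set G, (1 : G) ∈ S →
      (idealIS α I S ⊓ L) ⊔ idealISm α I S = (idealIS α I S ⊓ M) ⊔ idealISm α I S) :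
    idealIS α I {1} ⊓ L = idealIS α I {1} ⊓ M :=
  stmt2_general α I L M hLc hLM h
end

section
/- Let A be a C*-algebra and let a ∈ A with polar decomposition a = v(a*a)^{1/2} in the enveloping von Neumann algebra A**. Set B = closure((a*a)A(a*a)) and C = closure((aa*)A(aa*)). Then the map φ(x) = v x v* defines a *-isomorphism from B onto C with φ(a*a) = aa*, and for every positive x ∈ B, x is Cuntz equivalent to φ(x) in A. -/
/-!
The map `x ↦ v x v*` is inverted on `C` by `y ↦ v* y v`, because `v*v` is a two-sided unit for
`a*a` and `vv*` one for `aa*`, hence for the closed corners they generate.  The only analytic input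
is that for positive `b` the root `b^{1/2}` is a norm limit of `b gₙ(b)` with `gₙ(b) ∈ C*(b)`.
For `b = a*a` this puts `v (a*a) z (a*a) v* = a (|a| z |a|) a*` back into `C`; for positive
`x = b ∈ B` it shows that `c = v x^{1/2}` lies in `A`, and `c*c = x`, `cc* = v x v*`.
-/

open Filter Topology Set

/-- Cuntz equivalence of `x` and `y` witnessed inside the subset `S`:
there is `c ∈ S` with `c*c = x` and `cc* = y`. -/
def CuntzEquivIn {W : Type*} [NonUnitalCStarAlgebra W] (S : Set W) (x y : W) : Prop :=
  ∃ c ∈ S, star c * c = x ∧ c * star c = y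

/-- For `t ≥ 0`, `t * sqrtApprox n t = √t * nt / (1 + nt)` tends to `√t` uniformly; vanishing at
`0`, `sqrtApprox n` can be applied to elements of a non-unital algebra. -/
noncomputable def sqrtApprox (n : ℕ) (t : ℝ) : ℝ := √t * (n / (1 + n * |t|))

lemma continuous_sqrtApprox (n : ℕ) : Continuous (sqrtApprox n) :=
  Real.continuous_sqrt.mul (continuous_const.div (by fun_prop) fun t => by positivity)

@[simp]
lemma sqrtApprox_zero (n : ℕ) : sqrtApprox n 0 = 0 := by simp [sqrtApprox]

lemma abs_mul_sqrtApprox_sub_sqrt_le {n : ℕ} (hn : 1 ≤ n) {t : ℝ} (ht : 0 ≤ t) :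
    |t * sqrtApprox n t - √t| ≤ 1 / √n := by
  have hden : 0 < 1 + n * t := by positivity
  have hdiff : t * sqrtApprox n t - √t = -(√t / (1 + n * t)) := by
    rw [sqrtApprox, abs_of_nonneg ht]
    field_simp
    ring
  rw [hdiff, abs_neg, abs_of_nonneg (by positivity), div_le_div_iff₀ hden (by positivity)]
  have hsqrt : √t * √n = √(n * t) := by rw [mul_comm (n : ℝ) t, Real.sqrt_mul ht]
  have hsq : √(n * t) ^ 2 = n * t := Real.sq_sqrt (by positivity)
  nlinarith [Real.sqrt_nonneg (n * t), sq_nonneg (√(n * t) - 1)]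

lemma tendsto_one_div_sqrt_natCast : Tendsto (fun n : ℕ => 1 / √(n : ℝ)) atTop (𝓝 0) := by
  simpa only [one_div, Function.comp_def] using
    tendsto_inv_atTop_zero.comp (Real.tendsto_sqrt_atTop.comp tendsto_natCast_atTop_atTop)

section Corner

variable {W : Type*} [NonUnitalCStarAlgebra W] {A : NonUnitalStarSubalgebra ℂ W}

/-- The sets `B` and `C` of the statement are `closedCorner A (a*a)` and `closedCorner A (aa*)`. -/
def closedCorner (A : NonUnitalStarSubalgebra ℂ W) (b : W) : Set W :=
  closure {y : W | ∃ z ∈ A, y = b * z * b}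

lemma closedCorner_subset (hA : IsClosed (A : Set W)) {b : W} (hb : b ∈ A) :
    closedCorner A b ⊆ A :=
  closure_minimal (by rintro _ ⟨z, hz, rfl⟩; exact mul_mem (mul_mem hb hz) hb) hA

lemma mul_left_eq_self_of_mem_closedCorner {b e x : W} (h : e * b = b)
    (hx : x ∈ closedCorner A b) : e * x = x := by
  refine closure_minimal ?_ (isClosed_eq (continuous_const_mul e) continuous_id) hx
  rintro _ ⟨z, -, rfl⟩
  show e * (b * z * b) = b * z * b
  rw [← mul_assoc, ← mul_assoc, h]

lemma mul_right_eq_self_of_mem_closedCorner {b e x : W} (h : b * e = b)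
    (hx : x ∈ closedCorner A b) : x * e = x := by
  refine closure_minimal ?_ (isClosed_eq (continuous_mul_const e) continuous_id) hx
  rintro _ ⟨z, -, rfl⟩
  show b * z * b * e = b * z * b
  rw [mul_assoc, h]

lemma mul_mul_star_mem_closedCorner {c x : W} (hc : c ∈ A)
    (hx : x ∈ closedCorner A (star c * c)) : c * x * star c ∈ closedCorner A (c * star c) := by
  refine MapsTo.closure (f := fun y => c * y * star c) ?_ (by fun_prop) hx
  rintro _ ⟨z, hz, rfl⟩
  exact ⟨c * z * star c, mul_mem (mul_mem hc hz) (star_mem hc), by noncomm_ring⟩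

end Corner

section SquareRoot

variable {W : Type*} [NonUnitalCStarAlgebra W] [PartialOrder W] [StarOrderedRing W]

lemma tendsto_mul_cfcₙ_sqrtApprox {b : W} (hb : 0 ≤ b) :
    Tendsto (fun n => b * cfcₙ (sqrtApprox n) b) atTop (𝓝 (CFC.sqrt b)) := by
  rw [CFC.sqrt_eq_real_sqrt b hb, tendsto_iff_norm_sub_tendsto_zero]
  refine squeeze_zero' (.of_forall fun n => norm_nonneg _) ?_ tendsto_one_div_sqrt_natCast
  filter_upwards [eventually_ge_atTop 1] with n hn
  have hcfc : b * cfcₙ (sqrtApprox n) b - cfcₙ Real.sqrt b =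
      cfcₙ (fun t => t * sqrtApprox n t - √t) b := by
    rw [cfcₙ_sub (fun t => t * sqrtApprox n t) Real.sqrt b
        (hf := (continuous_id.mul (continuous_sqrtApprox n)).continuousOn),
      cfcₙ_mul (fun t => t) (sqrtApprox n) b (hg := (continuous_sqrtApprox n).continuousOn),
      cfcₙ_id' ℝ b]
  rw [hcfc]
  exact norm_cfcₙ_le fun t ht =>
    abs_mul_sqrtApprox_sub_sqrt_le hn (quasispectrum_nonneg_of_nonneg b hb t ht)

lemma mul_sqrt_eq_of_mul_eq {b e : W} (hb : 0 ≤ b) (h : e * b = b) :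
    e * CFC.sqrt b = CFC.sqrt b := by
  have hlim := tendsto_mul_cfcₙ_sqrtApprox hb
  refine tendsto_nhds_unique ?_ hlim
  simpa only [← mul_assoc, h] using hlim.const_mul e

variable {A : NonUnitalStarSubalgebra ℂ W}

lemma sqrt_mem (hA : IsClosed (A : Set W)) {b : W} (hb : b ∈ A) (hb0 : 0 ≤ b) :
    CFC.sqrt b ∈ A := by
  have : IsClosed (A : Set W) := hA
  rw [CFC.sqrt_eq_real_sqrt b hb0]
  exact cfcₙ_mem _ hb

lemma mul_sqrt_mem (hA : IsClosed (A : Set W)) {b y : W} (hb : b ∈ A) (hb0 : 0 ≤ b)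
    (hy : y * b ∈ A) : y * CFC.sqrt b ∈ A := by
  have : IsClosed (A : Set W) := hA
  refine hA.mem_of_tendsto ((tendsto_mul_cfcₙ_sqrtApprox hb0).const_mul y) (.of_forall fun n => ?_)
  rw [← mul_assoc]
  exact mul_mem hy (cfcₙ_mem _ hb)

lemma sqrt_mul_mul_sqrt_mem_closedCorner (hA : IsClosed (A : Set W)) {b z : W} (hb : b ∈ A)
    (hb0 : 0 ≤ b) (hz : z ∈ A) : CFC.sqrt b * z * CFC.sqrt b ∈ closedCorner A b := by
  have : IsClosed (A : Set W) := hA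
  have hlim := tendsto_mul_cfcₙ_sqrtApprox hb0
  refine mem_closure_of_tendsto ((hlim.mul_const z).mul hlim) (.of_forall fun n => ?_)
  set g := cfcₙ (sqrtApprox n) b
  have hcomm : g * b = b * g := ((Commute.refl b).cfcₙ_real _).eq
  refine ⟨g * z * g, mul_mem (mul_mem (cfcₙ_mem _ hb) hz) (cfcₙ_mem _ hb), ?_⟩
  simp only [mul_assoc]
  rw [← hcomm]

lemma cuntzEquivIn_mul_mul_star (hA : IsClosed (A : Set W)) {x y : W} (hx : x ∈ A)
    (hx0 : 0 ≤ x) (hyx : y * x ∈ A) (hy : star y * y * x = x) :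
    CuntzEquivIn (A : Set W) x (y * x * star y) := by
  have hq : IsSelfAdjoint (CFC.sqrt x) := (CFC.sqrt_nonneg x).isSelfAdjoint
  refine ⟨y * CFC.sqrt x, mul_sqrt_mem hA hx hx0 hyx, ?_, ?_⟩
  · rw [star_mul, hq.star_eq, mul_assoc, ← mul_assoc (star y), mul_sqrt_eq_of_mul_eq hx0 hy,
      CFC.sqrt_mul_sqrt_self x hx0]
  · rw [star_mul, hq.star_eq, mul_assoc, ← mul_assoc (CFC.sqrt x), CFC.sqrt_mul_sqrt_self x hx0,
      ← mul_assoc]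

end SquareRoot

section Polar

variable {W : Type*} [NonUnitalCStarAlgebra W] [PartialOrder W] [StarOrderedRing W]
  {A : NonUnitalStarSubalgebra ℂ W}

/-- The identities `a = v |a|` and `v* a = |a|` satisfied by the partial isometry of the polar
decomposition of `a` in `A**`, modelled by any C*-algebra containing `A`. -/
structure IsPolarFactor (v a : W) : Prop where
  mul_abs_eq : v * CFC.abs a = a
  star_mul_eq : star v * a = CFC.abs a

namespace IsPolarFactor

variable {a v : W}

lemma abs_mul_star_eq (h : IsPolarFactor v a) : CFC.abs a * star v = star a := by
  simpa only [star_mul, (CFC.abs_nonneg a).isSelfAdjoint.star_eq] using congrArg star h.mul_abs_eq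

lemma star_mul_eq' (h : IsPolarFactor v a) : star a * v = CFC.abs a := by
  simpa only [star_mul, star_star, (CFC.abs_nonneg a).isSelfAdjoint.star_eq]
    using congrArg star h.star_mul_eq

lemma star_mul_mul_star_mul_self (h : IsPolarFactor v a) :
    star v * v * (star a * a) = star a * a := by
  rw [← CFC.abs_mul_abs a, ← mul_assoc, mul_assoc (star v), h.mul_abs_eq, h.star_mul_eq]

lemma star_mul_self_mul_star_mul (h : IsPolarFactor v a) :
    star a * a * (star v * v) = star a * a := by
  simpa only [star_mul, star_star, mul_assoc] using congrArg star h.star_mul_mul_star_mul_self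

lemma mul_star_mul_mul_star_self (h : IsPolarFactor v a) :
    v * star v * (a * star a) = a * star a := by
  rw [← mul_assoc, mul_assoc v, h.star_mul_eq, h.mul_abs_eq]

lemma mul_star_self_mul_mul_star (h : IsPolarFactor v a) :
    a * star a * (v * star v) = a * star a := by
  simpa only [star_mul, star_star, mul_assoc] using congrArg star h.mul_star_mul_mul_star_self

lemma conj_star_mul_self (h : IsPolarFactor v a) : v * (star a * a) * star v = a * star a := by
  calc v * (star a * a) * star v = v * CFC.abs a * (CFC.abs a * star v) := by
        rw [← CFC.abs_mul_abs a]; simp only [mul_assoc]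
    _ = a * star a := by rw [h.mul_abs_eq, h.abs_mul_star_eq]

lemma mapsTo_closedCorner (h : IsPolarFactor v a) (hA : IsClosed (A : Set W)) (ha : a ∈ A) :
    MapsTo (fun x => v * x * star v) (closedCorner A (star a * a)) (closedCorner A (a * star a)) := by
  refine MapsTo.closure_left ?_ (by fun_prop) isClosed_closure
  rintro _ ⟨z, hz, rfl⟩
  have hconj : v * (star a * a * z * (star a * a)) * star v =
      a * (CFC.abs a * z * CFC.abs a) * star a :=
    calc _ = v * CFC.abs a * (CFC.abs a * z * CFC.abs a) * (CFC.abs a * star v) := by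
          rw [← CFC.abs_mul_abs a]; simp only [mul_assoc]
      _ = _ := by rw [h.mul_abs_eq, h.abs_mul_star_eq]
  dsimp only
  rw [hconj]
  exact mul_mul_star_mem_closedCorner ha <| sqrt_mul_mul_sqrt_mem_closedCorner hA
    (mul_mem (star_mem ha) ha) (star_mul_self_nonneg a) hz

lemma mapsTo_closedCorner_symm (h : IsPolarFactor v a) (hA : IsClosed (A : Set W)) (ha : a ∈ A) :
    MapsTo (fun y => star v * y * v) (closedCorner A (a * star a)) (closedCorner A (star a * a)) := by
  refine MapsTo.closure_left ?_ (by fun_prop) isClosed_closure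
  rintro _ ⟨z, hz, rfl⟩
  have hconj : star v * (a * star a * z * (a * star a)) * v =
      CFC.abs a * (star a * z * a) * CFC.abs a :=
    calc _ = star v * a * (star a * z * a) * (star a * v) := by simp only [mul_assoc]
      _ = _ := by rw [h.star_mul_eq, h.star_mul_eq']
  dsimp only
  rw [hconj]
  exact sqrt_mul_mul_sqrt_mem_closedCorner hA (mul_mem (star_mem ha) ha)
    (star_mul_self_nonneg a) (mul_mem (mul_mem (star_mem ha) hz) ha)

lemma invOn_closedCorner (h : IsPolarFactor v a) :
    InvOn (fun y => star v * y * v) (fun x => v * x * star v)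
      (closedCorner A (star a * a)) (closedCorner A (a * star a)) := by
  constructor
  · intro x hx
    calc star v * (v * x * star v) * v = star v * v * x * (star v * v) := by simp only [mul_assoc]
      _ = x := by
        rw [mul_left_eq_self_of_mem_closedCorner h.star_mul_mul_star_mul_self hx,
          mul_right_eq_self_of_mem_closedCorner h.star_mul_self_mul_star_mul hx]
  · intro y hy
    calc v * (star v * y * v) * star v = v * star v * y * (v * star v) := by simp only [mul_assoc]
      _ = y := by
        rw [mul_left_eq_self_of_mem_closedCorner h.mul_star_mul_mul_star_self hy,
          mul_right_eq_self_of_mem_closedCorner h.mul_star_self_mul_mul_star hy]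

lemma conj_mul (h : IsPolarFactor v a) (x : W) {y : W} (hy : y ∈ closedCorner A (star a * a)) :
    v * (x * y) * star v = v * x * star v * (v * y * star v) :=
  calc _ = v * x * (star v * v * y) * star v := by
        rw [mul_left_eq_self_of_mem_closedCorner h.star_mul_mul_star_mul_self hy, mul_assoc v x]
    _ = _ := by simp only [mul_assoc]

lemma mul_mem_of_mem_closedCorner (h : IsPolarFactor v a) (hA : IsClosed (A : Set W))
    (ha : a ∈ A) {x : W} (hx : x ∈ closedCorner A (star a * a)) : v * x ∈ A := by
  refine MapsTo.closure_left (f := (v * ·)) ?_ (by fun_prop) hA hx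
  rintro _ ⟨z, hz, rfl⟩
  have habs : CFC.abs a ∈ A := sqrt_mem hA (mul_mem (star_mem ha) ha) (star_mul_self_nonneg a)
  have hmul : v * (star a * a * z * (star a * a)) = a * (CFC.abs a * z * (star a * a)) :=
    calc _ = v * CFC.abs a * (CFC.abs a * z * (star a * a)) := by
          nth_rw 1 [← CFC.abs_mul_abs a]; simp only [mul_assoc]
      _ = _ := by rw [h.mul_abs_eq]
  dsimp only
  rw [hmul]
  exact mul_mem ha (mul_mem (mul_mem habs hz) (mul_mem (star_mem ha) ha))

lemma cuntzEquivIn (h : IsPolarFactor v a) (hA : IsClosed (A : Set W)) (ha : a ∈ A) {x : W}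
    (hx : x ∈ closedCorner A (star a * a)) (hx0 : 0 ≤ x) :
    CuntzEquivIn (A : Set W) x (v * x * star v) :=
  cuntzEquivIn_mul_mul_star hA (closedCorner_subset hA (mul_mem (star_mem ha) ha) hx) hx0
    (h.mul_mem_of_mem_closedCorner hA ha hx)
    (mul_left_eq_self_of_mem_closedCorner h.star_mul_mul_star_mul_self hx)

end IsPolarFactor

end Polar

/-- Polar decomposition lemma: let `A` be a (closed) C*-subalgebra of `W`
(playing the role of `A ⊆ A**`), `a ∈ A`, and let `v ∈ W` satisfy the polar
decomposition identities `a = v (a*a)^{1/2}` and `v* a = (a*a)^{1/2}`.  With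
`B = closure((a*a) A (a*a))` and `C = closure((aa*) A (aa*))`, the map
`φ(x) = v x v*` is a *-isomorphism of `B` onto `C` with `φ(a*a) = aa*`, and
`x ∼ φ(x)` (Cuntz equivalence in `A`) for every positive `x ∈ B`. -/
theorem stmt3 {W : Type*} [NonUnitalCStarAlgebra W] [PartialOrder W] [StarOrderedRing W]
    (A : NonUnitalStarSubalgebra ℂ W) (hA : IsClosed (A : Set W))
    (a : W) (ha : a ∈ A) (v : W)
    (hv1 : a = v * cfcₙ Real.sqrt (star a * a))
    (hv2 : star v * a = cfcₙ Real.sqrt (star a * a)) :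
    letI B : Set W := closure {y : W | ∃ z ∈ A, y = (star a * a) * z * (star a * a)}
    letI C : Set W := closure {y : W | ∃ z ∈ A, y = (a * star a) * z * (a * star a)}
    letI φ : W → W := fun x => v * x * star v
    Set.BijOn φ B C ∧
      (∀ x ∈ B, ∀ y ∈ B, φ (x + y) = φ x + φ y) ∧
      (∀ x ∈ B, ∀ y ∈ B, φ (x * y) = φ x * φ y) ∧
      (∀ x ∈ B, φ (star x) = star (φ x)) ∧
      (∀ (c : ℂ), ∀ x ∈ B, φ (c • x) = c • φ x) ∧
      φ (star a * a) = a * star a ∧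
      (∀ x ∈ B, 0 ≤ x → CuntzEquivIn (A : Set W) x (φ x)) := by
  have habs : CFC.abs a = cfcₙ Real.sqrt (star a * a) :=
    CFC.sqrt_eq_real_sqrt _ (star_mul_self_nonneg a)
  have h : IsPolarFactor v a := ⟨by rw [habs, ← hv1], by rw [habs, hv2]⟩
  refine ⟨h.invOn_closedCorner.bijOn (h.mapsTo_closedCorner hA ha)
      (h.mapsTo_closedCorner_symm hA ha), fun x _ y _ => by simp only [mul_add, add_mul],
    fun x _ y hy => h.conj_mul x hy, fun x _ => by simp only [star_mul, star_star, mul_assoc],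
    fun c x _ => by dsimp only; rw [mul_smul_comm, smul_mul_assoc], h.conj_star_mul_self,
    fun x hx hx0 => h.cuntzEquivIn hA ha hx hx0⟩
end

section
/- Let A be a C*-algebra, α an automorphism of A with α² = id_A, and D ⊆ A a hereditary subalgebra. If there is a nonzero x ∈ A with x*x ∈ D and xx* ∈ α(D), then there exists a nonzero y ∈ A with y*y ∈ D, yy* ∈ α(D), and α(y) = y*. (One may take y = ix if α(x) = −x*, and y = x + α(x*) otherwise.) -/
/-- A hereditary subalgebra of a C*-algebra. -/
def IsHereditarySubalgebra (A : Type*) [NonUnitalCStarAlgebra A] [PartialOrder A]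
    [StarOrderedRing A] (D : Set A) : Prop :=
  IsClosed D ∧ (0 : A) ∈ D ∧ (∀ x ∈ D, ∀ y ∈ D, x + y ∈ D) ∧
    (∀ (c : ℂ), ∀ x ∈ D, c • x ∈ D) ∧ (∀ x ∈ D, ∀ y ∈ D, x * y ∈ D) ∧
    (∀ x ∈ D, star x ∈ D) ∧
    (∀ x ∈ D, ∀ y : A, 0 ≤ y → y ≤ x → y ∈ D)

/-!
If `α x = -x*`, then `y = i x` works. Otherwise `y = x + α(x)*` is nonzero and satisfies
`α y = y*`, so `y y* = α(y* y)`. Writing `b = α(x)*`, both `x* x` and `b* b = α(x x*)` lie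
in `D`, and a hereditary subalgebra containing `a* a` and `b* b` contains `a* b` (by the
parallelogram law and polarization), hence contains `y* y = (x + b)* (x + b)`.
-/

section Polarization

variable {A : Type*} [NonUnitalRing A] [StarRing A] [Module ℂ A] [StarModule ℂ A]
  [IsScalarTower ℂ A A] [SMulCommClass ℂ A A]

theorem star_add_smul_mul_add_star_sub_smul_mul (a b : A) {u : ℂ} (hu : star u * u = 1) :
    star (a + u • b) * (a + u • b) + star (a - u • b) * (a - u • b)
      = (2 : ℂ) • (star a * a + star b * b) := by
  simp only [star_add, star_sub, star_smul, add_mul, mul_add, sub_mul, mul_sub,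
    smul_mul_assoc, mul_smul_comm]
  match_scalars <;>
    first | ring1 | linear_combination (-2 : ℂ) * hu | linear_combination (2 : ℂ) * hu

theorem four_smul_star_mul (a b : A) :
    (4 : ℂ) • (star a * b) = star (a + b) * (a + b) - star (a - b) * (a - b)
      + Complex.I • (star (a - Complex.I • b) * (a - Complex.I • b))
      - Complex.I • (star (a + Complex.I • b) * (a + Complex.I • b)) := by
  simp only [star_add, star_sub, star_smul, add_mul, mul_add, sub_mul, mul_sub, smul_add,
    smul_sub, smul_mul_assoc, mul_smul_comm, smul_smul, Complex.star_def, Complex.conj_I]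
  match_scalars <;> ring_nf <;> norm_num

end Polarization

namespace IsHereditarySubalgebra

variable {A : Type*} [NonUnitalCStarAlgebra A] [PartialOrder A] [StarOrderedRing A]
  {D : Set A}

theorem star_add_smul_mul_mem (hD : IsHereditarySubalgebra A D) {a b : A}
    (ha : star a * a ∈ D) (hb : star b * b ∈ D) {u : ℂ} (hu : star u * u = 1) :
    star (a + u • b) * (a + u • b) ∈ D := by
  obtain ⟨-, -, hadd, hsmul, -, -, hher⟩ := hD
  refine hher _ (hsmul 2 _ (hadd _ ha _ hb)) _ (star_mul_self_nonneg _) ?_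
  rw [← star_add_smul_mul_add_star_sub_smul_mul a b hu]
  exact le_add_of_nonneg_right (star_mul_self_nonneg _)

theorem star_mul_mem (hD : IsHereditarySubalgebra A D) {a b : A}
    (ha : star a * a ∈ D) (hb : star b * b ∈ D) : star a * b ∈ D := by
  have hadd := hD.2.2.1
  have hsmul := hD.2.2.2.1
  have hsub : ∀ x ∈ D, ∀ y ∈ D, x - y ∈ D := fun x hx y hy => by
    simpa [sub_eq_add_neg] using hadd x hx _ (hsmul (-1) y hy)
  have hmem : ∀ u : ℂ, star u * u = 1 → star (a + u • b) * (a + u • b) ∈ D :=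
    fun u hu => hD.star_add_smul_mul_mem ha hb hu
  have hplus := hmem 1 (by simp)
  have hminus := hmem (-1) (by simp)
  have hI := hmem Complex.I (by simp [Complex.conj_I])
  have hnegI := hmem (-Complex.I) (by simp [Complex.conj_I])
  simp only [one_smul, neg_smul, ← sub_eq_add_neg] at hplus hminus hnegI
  have h4 : (4 : ℂ) • (star a * b) ∈ D := by
    rw [four_smul_star_mul]
    exact hsub _ (hadd _ (hsub _ hplus _ hminus) _ (hsmul _ _ hnegI)) _ (hsmul _ _ hI)
  simpa [smul_smul] using hsmul 4⁻¹ _ h4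

theorem star_add_mul_add_mem (hD : IsHereditarySubalgebra A D) {a b : A}
    (ha : star a * a ∈ D) (hb : star b * b ∈ D) : star (a + b) * (a + b) ∈ D := by
  have hadd := hD.2.2.1
  have expand : star (a + b) * (a + b)
      = (star a * a + star a * b) + (star b * a + star b * b) := by
    simp only [star_add, add_mul, mul_add]
    abel
  rw [expand]
  exact hadd _ (hadd _ ha _ (hD.star_mul_mem ha hb)) _ (hadd _ (hD.star_mul_mem hb ha) _ hb)

end IsHereditarySubalgebra

theorem StarAlgEquiv.apply_star_mul_self_of_apply_eq_star {R A : Type*} [Add A] [Mul A]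
    [SMul R A] [InvolutiveStar A] (α : A ≃⋆ₐ[R] A) {y : A} (hy : α y = star y) :
    α (star y * y) = y * star y := by
  rw [map_mul, map_star, hy, star_star]

/-- Averaging lemma for order-two actions: if `D` is hereditary, `x ≠ 0`,
`x*x ∈ D` and `x x* ∈ α(D)`, then there is `y ≠ 0` with `y*y ∈ D`,
`y y* ∈ α(D)` and `α(y) = y*`. -/
theorem stmt7 {A : Type*} [NonUnitalCStarAlgebra A] [PartialOrder A] [StarOrderedRing A]
    (α : A ≃⋆ₐ[ℂ] A) (hα : ∀ a : A, α (α a) = a)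
    (D : Set A) (hD : IsHereditarySubalgebra A D)
    (x : A) (hx : x ≠ 0) (hx1 : star x * x ∈ D) (hx2 : x * star x ∈ (⇑α) '' D) :
    ∃ y : A, y ≠ 0 ∧ star y * y ∈ D ∧ y * star y ∈ (⇑α) '' D ∧ α y = star y := by
  suffices ∃ y : A, y ≠ 0 ∧ star y * y ∈ D ∧ α y = star y by
    obtain ⟨y, hy0, hyD, hαy⟩ := this
    exact ⟨y, hy0, hyD, ⟨_, hyD, α.apply_star_mul_self_of_apply_eq_star hαy⟩, hαy⟩
  by_cases hc : α x = -star x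
  · refine ⟨Complex.I • x, smul_ne_zero Complex.I_ne_zero hx, ?_, ?_⟩
    · simpa [smul_smul, Complex.conj_I, smul_mul_assoc, mul_smul_comm] using hx1
    · simp [hc, Complex.conj_I]
  · obtain ⟨d, hdD, hd⟩ := hx2
    have hb : star (star (α x)) * star (α x) ∈ D := by
      rwa [star_star, ← map_star, ← map_mul, ← hd, hα]
    refine ⟨x + star (α x), fun h0 => hc ?_, hD.star_add_mul_add_mem hx1 hb, ?_⟩
    · rw [← star_star (α x), ← neg_eq_of_add_eq_zero_right h0, star_neg]
    · rw [star_add, star_star, map_add, map_star, hα, add_comm]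
end

section
/- Let A be a C*-algebra, α an automorphism of A with α² = id_A, and let δ > 0. If x = a₁ − a₂ with a₁, a₂ ∈ A, 0 ≤ a₁, a₂ ≤ 1, ‖α(a₁) − a₂‖ < δ, ‖α(a₂) − a₁‖ < δ, and ‖a₁a₂‖ < δ, then setting y' = ½(x − α(x)), b₁ = (y')₊, b₂ = (y')₋, one has α(b₁) = b₂, b₁b₂ = 0, ‖b₁ − a₁‖ < 2δ^{1/2} + δ, and ‖b₂ − a₂‖ < 2δ^{1/2} + δ. -/
section Helpers

variable {A : Type*} [NonUnitalCStarAlgebra A] [PartialOrder A] [StarOrderedRing A]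

lemma cfc_fp_eq (a : A) : cfcₙ (fun t : ℝ => max t 0) a = a⁺ := by
  rw [CFC.posPart_def]
  exact cfcₙ_congr fun x _ => by simp [_root_.posPart_def]

lemma cfc_fn_eq (a : A) : cfcₙ (fun t : ℝ => max (-t) 0) a = a⁻ := by
  rw [CFC.negPart_def]
  exact cfcₙ_congr fun x _ => by simp [_root_.negPart_def, max_comm]

lemma quasi_le_norm_posPart (a : A) (ha : IsSelfAdjoint a) {t : ℝ}
    (ht : t ∈ quasispectrum ℝ a) : t ≤ ‖a⁺‖ := by
  rw [← cfc_fp_eq]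
  have h := norm_apply_le_norm_cfcₙ (fun t : ℝ => max t 0) a ht (by fun_prop) (by simp) ha
  rw [Real.norm_eq_abs, abs_of_nonneg (le_max_right _ _)] at h
  exact (le_max_left t 0).trans h

lemma neg_norm_negPart_le_quasi (a : A) (ha : IsSelfAdjoint a) {t : ℝ}
    (ht : t ∈ quasispectrum ℝ a) : -‖a⁻‖ ≤ t := by
  rw [neg_le, ← cfc_fn_eq]
  have h := norm_apply_le_norm_cfcₙ (fun t : ℝ => max (-t) 0) a ht (by fun_prop) (by simp) ha
  rw [Real.norm_eq_abs, abs_of_nonneg (le_max_right _ _)] at h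
  exact (le_max_left (-t) 0).trans h

lemma norm_posPart_mem_quasi (a : A) (ha : IsSelfAdjoint a) (hpos : 0 < ‖a⁺‖) :
    ‖a⁺‖ ∈ quasispectrum ℝ a := by
  obtain ⟨⟨x, hx, he⟩, -⟩ :=
    IsGreatest.norm_cfcₙ (A := A) (fun t : ℝ => max t 0) a (by fun_prop) (by simp) ha
  rw [cfc_fp_eq] at he
  simp only [Real.norm_eq_abs] at he
  rw [abs_of_nonneg (le_max_right _ _)] at he
  have hx0 : x = ‖a⁺‖ := by
    rcases max_cases x 0 with ⟨h1, -⟩ | ⟨h1, -⟩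
    · rw [← he, h1]
    · exfalso; rw [h1] at he; exact hpos.ne he
  exact hx0 ▸ hx

lemma cfc_mul_self_right (f : ℝ → ℝ) (a : A) (ha : IsSelfAdjoint a)
    (hf : ContinuousOn f (quasispectrum ℝ a)) (hf0 : f 0 = 0) :
    cfcₙ f a * a = cfcₙ (fun t => f t * t) a := by
  have h := cfcₙ_mul f (fun t : ℝ => t) a hf hf0 (by fun_prop) rfl
  rw [cfcₙ_id' ℝ a ha] at h
  exact h.symm

lemma conj_expand {R : Type*} [NonUnitalRing R] [Module ℝ R] [IsScalarTower ℝ R R]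
    [SMulCommClass ℝ R R] (E h s w : R) (r : ℝ) :
    E * (h * h) * E + E * (h * h) * E + (r • (E * s * E) + r • (E * s * E))
      + ((E * h - r • E) * s * E + E * s * (h * E - r • E) + E * w * E)
    = E * (h * h + h * h + (h * s + s * h) + w) * E := by
  simp only [mul_add, add_mul, sub_mul, mul_sub, smul_mul_assoc, mul_smul_comm, mul_assoc]
  abel

lemma cfc_mul_self_left (f : ℝ → ℝ) (a : A) (ha : IsSelfAdjoint a)
    (hf : ContinuousOn f (quasispectrum ℝ a)) (hf0 : f 0 = 0) :
    a * cfcₙ f a = cfcₙ (fun t => t * f t) a := by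
  have h := cfcₙ_mul (fun t : ℝ => t) f a (by fun_prop) rfl hf hf0
  rw [cfcₙ_id' ℝ a ha] at h
  exact h.symm

set_option maxHeartbeats 1000000 in
/-- Core spectral estimate: if `h` is selfadjoint, `s ≥ 0` and
`2h² + hs + sh + w = 0`, then `2‖h⁺‖² ≤ ‖w‖`. -/
lemma two_mul_sq_norm_posPart_le (h s w : A) (hh : IsSelfAdjoint h) (hs : 0 ≤ s)
    (iden : h * h + h * h + (h * s + s * h) + w = 0) :
    2 * ‖h⁺‖ ^ 2 ≤ ‖w‖ := by
  rcases eq_or_lt_of_le (norm_nonneg (h⁺ : A)) with h0 | hrpos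
  · rw [← h0]; simpa using norm_nonneg w
  set r : ℝ := ‖h⁺‖ with hr
  have main : ∀ θ : ℝ, 0 < θ → θ < r → 2 * (r - θ) ^ 2 ≤ 2 * (θ * ‖s‖) + ‖w‖ := by
    intro θ hθ hθr
    have hrθ : (0:ℝ) < r - θ := by linarith
    set φ : ℝ → ℝ := fun t => min (max ((t - (r - θ)) / θ) 0) 1 with hφdef
    have hφc : Continuous φ := by fun_prop
    have hφ0 : φ 0 = 0 := by
      have h1 : (0 - (r - θ)) / θ ≤ 0 := div_nonpos_of_nonpos_of_nonneg (by linarith) hθ.le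
      simp only [hφdef]
      rw [max_eq_right h1, min_eq_left zero_le_one]
    have hφnn : ∀ t, 0 ≤ φ t := fun t => le_min (le_max_right _ _) zero_le_one
    have hφle1 : ∀ t, φ t ≤ 1 := fun t => min_le_right _ _
    have hφsupp : ∀ t, φ t ≠ 0 → r - θ ≤ t := by
      intro t hne
      by_contra hlt
      push_neg at hlt
      apply hne
      have h1 : (t - (r - θ)) / θ ≤ 0 := div_nonpos_of_nonpos_of_nonneg (by linarith) hθ.le
      simp only [hφdef]
      rw [max_eq_right h1, min_eq_left zero_le_one]
    have hφr : φ r = 1 := by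
      have h1 : (r - (r - θ)) / θ = 1 := by field_simp; ring
      simp only [hφdef, h1]
      rw [max_eq_left zero_le_one, min_self]
    -- the spectral cut-off element
    set E : A := cfcₙ φ h with hEdef
    have hEsa : IsSelfAdjoint E := cfcₙ_predicate φ h
    have hnE : ‖E‖ ≤ 1 := norm_cfcₙ_le fun t _ => by
      rw [Real.norm_eq_abs, abs_of_nonneg (hφnn t)]; exact hφle1 t
    have hspec : ∀ t ∈ quasispectrum ℝ h, t ≤ r := fun t ht => quasi_le_norm_posPart h hh ht
    -- cfcₙ computations
    have e1 : E * h = cfcₙ (fun t => φ t * t) h :=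
      cfc_mul_self_right φ h hh hφc.continuousOn hφ0
    have e2 : h * E = cfcₙ (fun t => φ t * t) h := by
      rw [cfc_mul_self_left φ h hh hφc.continuousOn hφ0]
      exact cfcₙ_congr fun t _ => mul_comm t (φ t)
    have e3 : h * h = cfcₙ (fun t : ℝ => t * t) h := by
      have := cfc_mul_self_right (fun t : ℝ => t) h hh (by fun_prop) rfl
      rw [cfcₙ_id' ℝ h hh] at this
      exact this
    have e4 : E * (h * h) = cfcₙ (fun t => φ t * (t * t)) h := by
      rw [e3, hEdef]
      exact (cfcₙ_mul φ (fun t : ℝ => t * t) h hφc.continuousOn hφ0 (by fun_prop) (by simp)).symm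
    have e5 : E * (h * h) * E = cfcₙ (fun t => φ t * (t * t) * φ t) h := by
      rw [e4, hEdef]
      exact (cfcₙ_mul (fun t => φ t * (t * t)) φ h (by fun_prop) (by simp [hφ0])
        hφc.continuousOn hφ0).symm
    have e6 : E * E = cfcₙ (fun t => φ t * φ t) h := by
      rw [hEdef]
      exact (cfcₙ_mul φ φ h hφc.continuousOn hφ0 hφc.continuousOn hφ0).symm
    have e7 : E * h - r • E = cfcₙ (fun t => φ t * t - r * φ t) h := by
      have hsm : r • E = cfcₙ (fun t => r * φ t) h := by
        rw [hEdef]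
        exact (cfcₙ_const_mul r φ h hφc.continuousOn hφ0).symm
      rw [e1, hsm]
      exact (cfcₙ_sub _ _ h (by fun_prop) (by simp [hφ0]) (by fun_prop) (by simp [hφ0])).symm
    have hdiffnorm : ‖E * h - r • E‖ ≤ θ := by
      rw [e7]
      refine norm_cfcₙ_le fun t ht => ?_
      rw [Real.norm_eq_abs]
      rcases eq_or_ne (φ t) 0 with h0' | h0'
      · simp [h0', hθ.le]
      · have hb1 : r - θ ≤ t := hφsupp t h0'
        have hb2 : t ≤ r := hspec t ht
        have hre : φ t * t - r * φ t = φ t * (t - r) := by ring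
        rw [hre, abs_mul, abs_of_nonneg (hφnn t)]
        have : |t - r| ≤ θ := by rw [abs_le]; constructor <;> linarith
        nlinarith [hφle1 t, hφnn t, abs_nonneg (t - r)]
    -- algebraic identity after conjugation
    set X : A := E * (h * h) * E with hXdef
    set P : A := r • (E * s * E) + r • (E * s * E) with hPdef
    set Err : A := (E * h - r • E) * s * E + E * s * (h * E - r • E) + E * w * E with hErrdef
    have halg : X + X + P + Err = 0 := by
      have expand : X + X + P + Err = E * (h * h + h * h + (h * s + s * h) + w) * E := by
        simp only [hXdef, hPdef, hErrdef]
        simp only [mul_add, add_mul, sub_mul, mul_sub, smul_mul_assoc, mul_smul_comm, mul_assoc]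
        abel
      rw [expand, iden, mul_zero, zero_mul]
    -- positivity facts
    have hEsE : 0 ≤ E * s * E := hEsa.conjugate_nonneg hs
    have hP0 : 0 ≤ P := add_nonneg (smul_nonneg hrpos.le hEsE) (smul_nonneg hrpos.le hEsE)
    have hX0 : 0 ≤ X := by
      rw [e5]
      exact cfcₙ_nonneg fun t _ => by nlinarith [hφnn t, sq_nonneg (φ t * t)]
    -- lower bound for X + X
    have e8 : X + X = cfcₙ (fun t => φ t * (t * t) * φ t + φ t * (t * t) * φ t) h := by
      rw [e5]
      exact (cfcₙ_add _ _ h (by fun_prop) (by simp [hφ0]) (by fun_prop) (by simp [hφ0])).symm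
    have e9 : (2 * (r - θ) ^ 2) • (E * E) = cfcₙ (fun t => 2 * (r - θ) ^ 2 * (φ t * φ t)) h := by
      rw [e6]
      exact (cfcₙ_const_mul (2 * (r - θ) ^ 2) _ h (by fun_prop) (by simp [hφ0])).symm
    have hlow : (2 * (r - θ) ^ 2) • (E * E) ≤ E * (h * h) * E + E * (h * h) * E := by
      rw [← sub_nonneg, e8, e9,
        ← cfcₙ_sub _ _ h (by fun_prop) (by simp [hφ0]) (by fun_prop) (by simp [hφ0])]
      refine cfcₙ_nonneg fun t _ => ?_
      rcases eq_or_ne (φ t) 0 with h0' | h0'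
      · simp [h0']
      · have hb1 : r - θ ≤ t := hφsupp t h0'
        have hb2 : (r - θ) ^ 2 ≤ t ^ 2 := by nlinarith
        nlinarith [sq_nonneg (φ t), hφnn t]
    have hEEnorm : 1 ≤ ‖E * E‖ := by
      rw [e6]
      have hm := norm_apply_le_norm_cfcₙ (fun t => φ t * φ t) h
        (norm_posPart_mem_quasi h hh hrpos) (by fun_prop) (by simp [hφ0]) hh
      simp only [← hr, hφr, Real.norm_eq_abs] at hm
      simpa using hm
    have hEE0 : 0 ≤ E * E := by
      rw [e6]; exact cfcₙ_nonneg fun t _ => mul_nonneg (hφnn t) (hφnn t)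
    -- chain of inequalities
    have step1 : 2 * (r - θ) ^ 2 ≤ ‖(2 * (r - θ) ^ 2) • (E * E)‖ := by
      rw [norm_smul, Real.norm_eq_abs, abs_of_nonneg (by positivity)]
      nlinarith [hEEnorm]
    have step2 : ‖(2 * (r - θ) ^ 2) • (E * E)‖ ≤ ‖E * (h * h) * E + E * (h * h) * E‖ :=
      CStarAlgebra.norm_le_norm_of_nonneg_of_le (smul_nonneg (by positivity) hEE0) hlow
    have step3 : ‖E * (h * h) * E + E * (h * h) * E‖
        ≤ ‖E * (h * h) * E + E * (h * h) * E + (r • (E * s * E) + r • (E * s * E))‖ :=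
      CStarAlgebra.norm_le_norm_of_nonneg_of_le (add_nonneg hX0 hX0)
        (le_add_of_nonneg_right hP0)
    have step4 : ‖E * (h * h) * E + E * (h * h) * E + (r • (E * s * E) + r • (E * s * E))‖
        = ‖(E * h - r • E) * s * E + E * s * (h * E - r • E) + E * w * E‖ := by
      rw [eq_neg_of_add_eq_zero_left halg, norm_neg]
    have step5 : ‖(E * h - r • E) * s * E + E * s * (h * E - r • E) + E * w * E‖
        ≤ θ * ‖s‖ + θ * ‖s‖ + ‖w‖ := by
      refine (norm_add₃_le).trans ?_
      gcongr
      · calc ‖(E * h - r • E) * s * E‖ ≤ ‖(E * h - r • E) * s‖ * ‖E‖ := norm_mul_le _ _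
          _ ≤ ‖E * h - r • E‖ * ‖s‖ * ‖E‖ := by gcongr; exact norm_mul_le _ _
          _ ≤ θ * ‖s‖ * 1 := by
              have h1 : ‖E * h - r • E‖ * ‖s‖ ≤ θ * ‖s‖ := by gcongr
              exact mul_le_mul h1 hnE (norm_nonneg _) (by positivity)
          _ = θ * ‖s‖ := mul_one _
      · have hhEd : h * E - r • E = E * h - r • E := by rw [e2, e1]
        calc ‖E * s * (h * E - r • E)‖ ≤ ‖E * s‖ * ‖h * E - r • E‖ := norm_mul_le _ _
          _ ≤ ‖E‖ * ‖s‖ * ‖h * E - r • E‖ := by gcongr; exact norm_mul_le _ _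
          _ ≤ 1 * ‖s‖ * θ := by
              rw [hhEd]
              have h1 : ‖E‖ * ‖s‖ ≤ 1 * ‖s‖ := by gcongr
              exact mul_le_mul h1 hdiffnorm (norm_nonneg _) (by positivity)
          _ = θ * ‖s‖ := by ring
      · calc ‖E * w * E‖ ≤ ‖E * w‖ * ‖E‖ := norm_mul_le _ _
          _ ≤ ‖E‖ * ‖w‖ * ‖E‖ := by gcongr; exact norm_mul_le _ _
          _ ≤ 1 * ‖w‖ * 1 := by
              refine mul_le_mul (mul_le_mul hnE le_rfl (norm_nonneg _) zero_le_one) hnE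
                (norm_nonneg _) (by positivity)
          _ = ‖w‖ := by ring
    linarith [step1.trans (step2.trans (step3.trans (step4.le.trans step5)))]
  -- pass to the limit θ → 0
  refine le_of_forall_pos_le_add fun η hη => ?_
  have hrpos' : 0 < r := hrpos
  have hC : (0:ℝ) < 2 * ‖s‖ + 4 * r := by positivity
  set θ := min (r / 2) (η / (2 * ‖s‖ + 4 * r)) with hθdef
  have hθpos : 0 < θ := lt_min (by linarith) (by positivity)
  have hθr : θ < r := (min_le_left _ _).trans_lt (by linarith)
  have h1 := main θ hθpos hθr
  have h2 : θ * (2 * ‖s‖ + 4 * r) ≤ η := by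
    calc θ * (2 * ‖s‖ + 4 * r) ≤ (η / (2 * ‖s‖ + 4 * r)) * (2 * ‖s‖ + 4 * r) := by
          gcongr
          exact min_le_right _ _
      _ = η := by field_simp
  nlinarith [sq_nonneg θ]

/-- Key lemma: for `0 ≤ c, d`, the positive part of `c - d` is close to `c`. -/
lemma norm_posPart_sub_le (c d : A) (hc : 0 ≤ c) (hd : 0 ≤ d) :
    ‖(c - d)⁺ - c‖ ≤ Real.sqrt ‖c * d‖ := by
  have hcsa : IsSelfAdjoint c := .of_nonneg hc
  have hdsa : IsSelfAdjoint d := .of_nonneg hd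
  have hz : IsSelfAdjoint (c - d) := hcsa.sub hdsa
  set p : A := (c - d)⁺ with hpdef
  set n : A := (c - d)⁻ with hndef
  have hpnn : 0 ≤ p := CFC.posPart_nonneg _
  have hnnn : 0 ≤ n := CFC.negPart_nonneg _
  have hpn0 : p * n = 0 := CFC.posPart_mul_negPart _
  have hnp0 : n * p = 0 := CFC.negPart_mul_posPart _
  set h : A := p - c with hhdef
  have hhsa : IsSelfAdjoint h := (IsSelfAdjoint.of_nonneg hpnn).sub hcsa
  have hpc : h + c = p := by rw [hhdef]; abel
  have hpd : h + d = n := by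
    have h3 : p - n = c - d := CFC.posPart_sub_negPart (c - d) hz
    have h4 : n = p - (c - d) := by rw [← h3]; abel
    rw [h4, hhdef]; abel
  set s : A := c + d with hsdef
  set w : A := c * d + d * c with hwdef
  have iden : h * h + h * h + (h * s + s * h) + w = 0 := by
    have h1 : (h + c) * (h + d) = 0 := by rw [hpc, hpd]; exact hpn0
    have h2 : (h + d) * (h + c) = 0 := by rw [hpc, hpd]; exact hnp0
    have expand : h * h + h * h + (h * s + s * h) + w
        = (h + c) * (h + d) + (h + d) * (h + c) := by
      simp only [hsdef, hwdef, mul_add, add_mul]; abel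
    rw [expand, h1, h2, add_zero]
  have hw2 : ‖w‖ ≤ 2 * ‖c * d‖ := by
    have hst : d * c = star (c * d) := by rw [star_mul, hcsa.star_eq, hdsa.star_eq]
    calc ‖w‖ ≤ ‖c * d‖ + ‖d * c‖ := norm_add_le _ _
      _ = ‖c * d‖ + ‖c * d‖ := by rw [hst, norm_star]
      _ = 2 * ‖c * d‖ := by ring
  -- positive part estimate
  have hpos := two_mul_sq_norm_posPart_le h s w hhsa (add_nonneg hc hd) iden
  -- negative part estimate via `-h`
  have hs' : 0 ≤ h + h + s := by
    have he : h + h + s = (h + c) + (h + d) := by rw [hsdef]; abel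
    rw [he, hpc, hpd]
    exact add_nonneg hpnn hnnn
  have iden' : (-h) * (-h) + (-h) * (-h) + ((-h) * (h + h + s) + (h + h + s) * (-h)) + (-w)
      = 0 := by
    have hre : (-h) * (-h) + (-h) * (-h) + ((-h) * (h + h + s) + (h + h + s) * (-h)) + (-w)
        = -(h * h + h * h + (h * s + s * h) + w) := by
      simp only [neg_mul, mul_neg, mul_add, add_mul, neg_neg]; abel
    rw [hre, iden, neg_zero]
  have hneg := two_mul_sq_norm_posPart_le (-h) (h + h + s) (-w) hhsa.neg hs' iden'
  rw [CFC.posPart_neg, norm_neg] at hneg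
  -- combine
  have hp2 : ‖(h⁺ : A)‖ ^ 2 ≤ ‖c * d‖ := by linarith
  have hn2 : ‖(h⁻ : A)‖ ^ 2 ≤ ‖c * d‖ := by linarith
  have hple : ‖(h⁺ : A)‖ ≤ Real.sqrt ‖c * d‖ := by
    rw [← Real.sqrt_sq (norm_nonneg (h⁺ : A))]
    exact Real.sqrt_le_sqrt hp2
  have hnle : ‖(h⁻ : A)‖ ≤ Real.sqrt ‖c * d‖ := by
    rw [← Real.sqrt_sq (norm_nonneg (h⁻ : A))]
    exact Real.sqrt_le_sqrt hn2
  calc ‖h‖ = ‖cfcₙ (fun t : ℝ => t) h‖ := by rw [cfcₙ_id' ℝ h hhsa]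
    _ ≤ Real.sqrt ‖c * d‖ := by
        refine norm_cfcₙ_le fun t ht => ?_
        rw [Real.norm_eq_abs, abs_le]
        constructor
        · have := neg_norm_negPart_le_quasi h hhsa ht
          linarith
        · exact (quasi_le_norm_posPart h hhsa ht).trans hple

lemma starAlgEquiv_nonneg (α : A ≃⋆ₐ[ℂ] A) {a : A} (ha : 0 ≤ a) : 0 ≤ α a := by
  rw [← CFC.sqrt_mul_sqrt_self a ha, map_mul]
  nth_rw 1 [← (IsSelfAdjoint.of_nonneg (CFC.sqrt_nonneg (a := a))).star_eq]
  rw [map_star]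
  exact star_mul_self_nonneg _

end Helpers

/-- Averaging near-orthogonal positive elements exchanged by an order-two automorphism:
with `x = a₁ - a₂`, `y' = ½(x - α(x))`, `b₁ = (y')₊`, `b₂ = (y')₋`, one has
`α(b₁) = b₂`, `b₁ b₂ = 0`, and `b₁, b₂` are close to `a₁, a₂`. -/
theorem stmt9 {A : Type*} [NonUnitalCStarAlgebra A] [PartialOrder A] [StarOrderedRing A]
    (α : A ≃⋆ₐ[ℂ] A) (hα : ∀ a : A, α (α a) = a)
    (δ : ℝ) (hδ : 0 < δ) (a₁ a₂ : A)
    (ha₁0 : 0 ≤ a₁) (ha₁1 : ‖a₁‖ ≤ 1) (ha₂0 : 0 ≤ a₂) (ha₂1 : ‖a₂‖ ≤ 1)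
    (h₁ : ‖α a₁ - a₂‖ < δ) (h₂ : ‖α a₂ - a₁‖ < δ) (h₃ : ‖a₁ * a₂‖ < δ) :
    letI x : A := a₁ - a₂
    letI y' : A := (1 / 2 : ℝ) • (x - α x)
    letI b₁ : A := cfcₙ (fun t : ℝ => max t 0) y'
    letI b₂ : A := cfcₙ (fun t : ℝ => max (-t) 0) y'
    α b₁ = b₂ ∧ b₁ * b₂ = 0 ∧
      ‖b₁ - a₁‖ < 2 * Real.sqrt δ + δ ∧ ‖b₂ - a₂‖ < 2 * Real.sqrt δ + δ := by
  set y' : A := (1 / 2 : ℝ) • (a₁ - a₂ - α (a₁ - a₂)) with hy'def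
  set b₁ : A := cfcₙ (fun t : ℝ => max t 0) y' with hb₁def
  set b₂ : A := cfcₙ (fun t : ℝ => max (-t) 0) y' with hb₂def
  set c : A := (1 / 2 : ℝ) • (a₁ + α a₂) with hcdef
  set d : A := (1 / 2 : ℝ) • (a₂ + α a₁) with hddef
  have hc0 : 0 ≤ c := smul_nonneg (by norm_num)
    (add_nonneg ha₁0 (starAlgEquiv_nonneg α ha₂0))
  have hd0 : 0 ≤ d := smul_nonneg (by norm_num)
    (add_nonneg ha₂0 (starAlgEquiv_nonneg α ha₁0))
  have hy' : y' = c - d := by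
    rw [hy'def, hcdef, hddef, map_sub, ← smul_sub]
    congr 1
    abel
  have hy'sa : IsSelfAdjoint y' := by
    rw [hy']
    exact (IsSelfAdjoint.of_nonneg hc0).sub (IsSelfAdjoint.of_nonneg hd0)
  have hb₁ : b₁ = y'⁺ := cfc_fp_eq y'
  have hb₂ : b₂ = y'⁻ := cfc_fn_eq y'
  have hαy' : α y' = -y' := by
    have hstep : α y' = (1 / 2 : ℝ) • (α (a₁ - a₂) - α (α (a₁ - a₂))) := by
      rw [hy'def, ← Complex.coe_smul, map_smul, Complex.coe_smul, map_sub]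
    rw [hstep, hα, hy'def, ← smul_neg]
    congr 1
    abel
  have hnormα : ∀ v : A, ‖α v‖ = ‖v‖ := fun v => NonUnitalStarAlgHom.norm_map α α.injective v
  -- first component
  have comp1 : α b₁ = b₂ := by
    have hcont : Continuous α := (NonUnitalStarAlgHom.isometry α α.injective).continuous
    have hmap := NonUnitalStarAlgHomClass.map_cfcₙ (S := ℂ) α (fun t : ℝ => max t 0) y'
      (by fun_prop) (by simp) hcont hy'sa (by rw [hαy']; exact hy'sa.neg)
    calc α b₁ = cfcₙ (fun t : ℝ => max t 0) (α y') := hmap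
      _ = cfcₙ (fun t : ℝ => max t 0) (-y') := by rw [hαy']
      _ = b₂ := by rw [cfc_fp_eq, CFC.posPart_neg, ← hb₂]
  -- second component
  have comp2 : b₁ * b₂ = 0 := by
    rw [hb₁, hb₂]; exact CFC.posPart_mul_negPart y'
  -- norm of c * d
  have sa₁ : IsSelfAdjoint a₁ := .of_nonneg ha₁0
  have sa₂ : IsSelfAdjoint a₂ := .of_nonneg ha₂0
  have t2 : ‖a₁ * α a₁‖ < 2 * δ := by
    have hsplit : a₁ * α a₁ = a₁ * (α a₁ - a₂) + a₁ * a₂ := by rw [mul_sub]; abel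
    have hu : ‖a₁ * (α a₁ - a₂)‖ ≤ δ := by
      refine (norm_mul_le _ _).trans ?_
      nlinarith [norm_nonneg (α a₁ - a₂), norm_nonneg a₁]
    calc ‖a₁ * α a₁‖ ≤ ‖a₁ * (α a₁ - a₂)‖ + ‖a₁ * a₂‖ := by rw [hsplit]; exact norm_add_le _ _
      _ < δ + δ := by linarith
      _ = 2 * δ := by ring
  have t3 : ‖α a₂ * a₂‖ < 2 * δ := by
    have hsplit : α a₂ * a₂ = (α a₂ - a₁) * a₂ + a₁ * a₂ := by rw [sub_mul]; abel
    have hu : ‖(α a₂ - a₁) * a₂‖ ≤ δ := by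
      refine (norm_mul_le _ _).trans ?_
      nlinarith [norm_nonneg (α a₂ - a₁), norm_nonneg a₂]
    calc ‖α a₂ * a₂‖ ≤ ‖(α a₂ - a₁) * a₂‖ + ‖a₁ * a₂‖ := by rw [hsplit]; exact norm_add_le _ _
      _ < δ + δ := by linarith
      _ = 2 * δ := by ring
  have t4 : ‖α a₂ * α a₁‖ < δ := by
    rw [← map_mul, hnormα]
    have hst : a₂ * a₁ = star (a₁ * a₂) := by rw [star_mul, sa₁.star_eq, sa₂.star_eq]
    rw [hst, norm_star]
    exact h₃
  have hcd4 : c * d = (1 / 4 : ℝ) • ((a₁ + α a₂) * (a₂ + α a₁)) := by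
    rw [hcdef, hddef, smul_mul_assoc, mul_smul_comm, smul_smul]
    norm_num
  have hexp : (a₁ + α a₂) * (a₂ + α a₁)
      = a₁ * a₂ + a₁ * α a₁ + α a₂ * a₂ + α a₂ * α a₁ := by
    simp only [mul_add, add_mul]; abel
  have hcd : ‖c * d‖ ≤ 3 / 2 * δ := by
    have hbig : ‖(a₁ + α a₂) * (a₂ + α a₁)‖ ≤ 6 * δ := by
      rw [hexp]
      calc ‖a₁ * a₂ + a₁ * α a₁ + α a₂ * a₂ + α a₂ * α a₁‖
          ≤ ‖a₁ * a₂ + a₁ * α a₁ + α a₂ * a₂‖ + ‖α a₂ * α a₁‖ := norm_add_le _ _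
        _ ≤ ‖a₁ * a₂‖ + ‖a₁ * α a₁‖ + ‖α a₂ * a₂‖ + ‖α a₂ * α a₁‖ := by
            gcongr ?_ + _
            exact norm_add₃_le
        _ ≤ 6 * δ := by linarith
    rw [hcd4, norm_smul, Real.norm_eq_abs]
    rw [show |(1 / 4 : ℝ)| = 1 / 4 by norm_num]
    linarith
  have hdc : ‖d * c‖ ≤ 3 / 2 * δ := by
    have hst : d * c = star (c * d) := by
      rw [star_mul, (IsSelfAdjoint.of_nonneg hc0).star_eq, (IsSelfAdjoint.of_nonneg hd0).star_eq]
    rw [hst, norm_star]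
    exact hcd
  -- sqrt bound
  have hsqrt4 : Real.sqrt (4 * δ) = 2 * Real.sqrt δ := by
    rw [show (4 : ℝ) * δ = 2 ^ 2 * δ by norm_num, Real.sqrt_mul (by positivity),
      Real.sqrt_sq (by norm_num)]
  have hsq_cd : Real.sqrt ‖c * d‖ ≤ 2 * Real.sqrt δ := by
    rw [← hsqrt4]
    exact Real.sqrt_le_sqrt (by linarith)
  have hsq_dc : Real.sqrt ‖d * c‖ ≤ 2 * Real.sqrt δ := by
    rw [← hsqrt4]
    exact Real.sqrt_le_sqrt (by linarith)
  -- third component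
  have hca₁ : ‖c - a₁‖ < δ / 2 := by
    have he : c - a₁ = (1 / 2 : ℝ) • (α a₂ - a₁) := by rw [hcdef]; module
    rw [he, norm_smul, Real.norm_eq_abs, show |(1 / 2 : ℝ)| = 1 / 2 by norm_num]
    linarith
  have hda₂ : ‖d - a₂‖ < δ / 2 := by
    have he : d - a₂ = (1 / 2 : ℝ) • (α a₁ - a₂) := by rw [hddef]; module
    rw [he, norm_smul, Real.norm_eq_abs, show |(1 / 2 : ℝ)| = 1 / 2 by norm_num]
    linarith
  have hb₁cd : b₁ = (c - d)⁺ := by rw [hb₁, hy']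
  have hb₂cd : b₂ = (d - c)⁺ := by rw [hb₂, hy', ← CFC.posPart_neg, neg_sub]
  have key₁ := norm_posPart_sub_le c d hc0 hd0
  have key₂ := norm_posPart_sub_le d c hd0 hc0
  have comp3 : ‖b₁ - a₁‖ < 2 * Real.sqrt δ + δ := by
    have hsplit : b₁ - a₁ = ((c - d)⁺ - c) + (c - a₁) := by rw [hb₁cd]; abel
    calc ‖b₁ - a₁‖ ≤ ‖(c - d)⁺ - c‖ + ‖c - a₁‖ := by rw [hsplit]; exact norm_add_le _ _
      _ < 2 * Real.sqrt δ + δ := by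
          have := key₁.trans hsq_cd
          linarith
  have comp4 : ‖b₂ - a₂‖ < 2 * Real.sqrt δ + δ := by
    have hsplit : b₂ - a₂ = ((d - c)⁺ - d) + (d - a₂) := by rw [hb₂cd]; abel
    calc ‖b₂ - a₂‖ ≤ ‖(d - c)⁺ - d‖ + ‖d - a₂‖ := by rw [hsplit]; exact norm_add_le _ _
      _ < 2 * Real.sqrt δ + δ := by
          have := key₂.trans hsq_dc
          linarith
  exact ⟨comp1, comp2, comp3, comp4⟩
end
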